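/- (Fixed point of the active-set map implies inclusion of J_{λ,2}.) In the noise-free setting under Assumption 1, let A ⊆ A† satisfy J_{λ,3} ⊆ A, let d ∈ ℝ^p have |d_i| = λ for all i ∈ A, let x ∈ ℝ^p be given by x_i = 0 for i ∉ A and x_A = (Ψ_AᵗΨ_A)⁻¹(Ψ_Aᵗ y − d_A), set d_i = Ψ_iᵗ(y − Ψ_A x_A) for i ∉ A, and define A' = {i : |x_i + d_i| > λ}. If A' = A, then J_{λ,2} ⊆ A. -/

import Mathlib

open Matrix

/-- The submatrix `Ψ_A` of `Ψ` consisting of the columns indexed by `A`. -/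
def colSub {n p : ℕ} (Ψ : Matrix (Fin n) (Fin p) ℝ) (A : Finset (Fin p)) :
    Matrix (Fin n) {i // i ∈ A} ℝ :=
  Matrix.of fun i j => Ψ i j.1

/-- `Ψ` satisfies the restricted isometry property of order `k` with constant `δ`:
`(1 − δ)‖x‖₂² ≤ ‖Ψx‖₂² ≤ (1 + δ)‖x‖₂²` for all `x` with at most `k` nonzero entries. -/
def HasRIP {n p : ℕ} (Ψ : Matrix (Fin n) (Fin p) ℝ) (k : ℕ) (δ : ℝ) : Prop :=
  ∀ x : Fin p → ℝ, (Finset.univ.filter (fun i => x i ≠ 0)).card ≤ k →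
    (1 - δ) * (∑ i, x i ^ 2) ≤ ∑ j, (Ψ *ᵥ x) j ^ 2 ∧
      ∑ j, (Ψ *ᵥ x) j ^ 2 ≤ (1 + δ) * (∑ i, x i ^ 2)

/-!
Put `e = x† − x`. The normal equations on `A` and the definition of `d` off `A` say that
`d = ΨᵀΨe`, and the fixed-point condition `A' = A` gives `‖ΨᵀΨe‖_∞ ≤ λ`. As `e` is supported
in `A†`, the RIP yields `(1 − δ)‖e‖² ≤ ⟨e, ΨᵀΨe⟩ ≤ λ‖e‖₁ ≤ λ√T‖e‖`. For `i ∉ A` we have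
`e_i = x†_i`; splitting `e` into its `i`-th coordinate and the rest, the RIP bound
`|⟨Ψu, Ψv⟩| ≤ δ‖u‖‖v‖` for disjointly supported `u, v` gives `(1 − δ)|x†_i| ≤ λ + δ‖e‖`.
Under Assumption 1 the two estimates force `|x†_i| < 2λ`.
-/

open Finset

lemma card_filter_ne_zero_le_add {ι M : Type*} [Fintype ι] [DecidableEq ι] [Zero M] [DecidableEq M]
    {u v w : ι → M} (h : ∀ i, w i ≠ 0 → u i ≠ 0 ∨ v i ≠ 0) :
    #{i | w i ≠ 0} ≤ #{i | u i ≠ 0} + #{i | v i ≠ 0} := by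
  refine (card_le_card fun i hi => ?_).trans (card_union_le _ _)
  simp only [mem_filter, mem_univ, true_and, mem_union] at hi ⊢
  exact h i hi

lemma sum_abs_le_sqrt_card_mul_sqrt {ι : Type*} [Fintype ι] (e : ι → ℝ) :
    ∑ i, |e i| ≤ √(#{i | e i ≠ 0}) * √(e ⬝ᵥ e) := by
  classical
  rw [← Real.sqrt_mul (Nat.cast_nonneg _)]
  have hsum : ∑ i, |e i| = ∑ i ∈ {i | e i ≠ 0}, |e i| :=
    (sum_filter_of_ne fun i _ hi => by simpa using hi).symm
  have hsq : e ⬝ᵥ e = ∑ i ∈ {i | e i ≠ 0}, |e i| ^ 2 := by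
    rw [sum_filter_of_ne fun i _ hi => by simpa using hi]
    simp [dotProduct, sq]
  refine (le_abs_self _).trans (Real.abs_le_sqrt ?_)
  rw [hsum, hsq]
  exact sq_sum_le_card_mul_sum_sq

lemma card_filter_single_one_ne_zero {ι : Type*} [Fintype ι] [DecidableEq ι] (i : ι) :
    #{j | (Pi.single i (1 : ℝ) : ι → ℝ) j ≠ 0} = 1 := by
  rw [card_eq_one]
  exact ⟨i, by ext j; by_cases h : j = i <;> simp [h]⟩

lemma dotProduct_self_nonneg {ι : Type*} [Fintype ι] (v : ι → ℝ) : 0 ≤ v ⬝ᵥ v :=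
  sum_nonneg fun i _ => mul_self_nonneg (v i)

variable {n p : ℕ}

lemma colSub_mulVec (Ψ : Matrix (Fin n) (Fin p) ℝ) (A : Finset (Fin p)) (z : {i // i ∈ A} → ℝ) :
    colSub Ψ A *ᵥ z = Ψ *ᵥ fun i => if h : i ∈ A then z ⟨i, h⟩ else 0 := by
  ext l
  simp only [mulVec, dotProduct, colSub, of_apply, mul_dite, mul_zero]
  exact sum_attach_eq_sum_dite A fun j => Ψ l j * z j

namespace HasRIP

variable {Ψ : Matrix (Fin n) (Fin p) ℝ} {k : ℕ} {δ : ℝ}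

lemma one_sub_mul_le (h : HasRIP Ψ k δ) {x : Fin p → ℝ} (hx : #{i | x i ≠ 0} ≤ k) :
    (1 - δ) * (x ⬝ᵥ x) ≤ (Ψ *ᵥ x) ⬝ᵥ (Ψ *ᵥ x) := by
  simpa only [dotProduct, sq] using (h x hx).1

lemma le_one_add_mul (h : HasRIP Ψ k δ) {x : Fin p → ℝ} (hx : #{i | x i ≠ 0} ≤ k) :
    (Ψ *ᵥ x) ⬝ᵥ (Ψ *ᵥ x) ≤ (1 + δ) * (x ⬝ᵥ x) := by
  simpa only [dotProduct, sq] using (h x hx).2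

lemma nonneg (h : HasRIP Ψ k δ) (hk : 1 ≤ k) (i : Fin p) : 0 ≤ δ := by
  have hi : #{j | (Pi.single i (1 : ℝ) : Fin p → ℝ) j ≠ 0} ≤ k :=
    (card_filter_single_one_ne_zero i).trans_le hk
  have := (h.one_sub_mul_le hi).trans (h.le_one_add_mul hi)
  simp only [single_one_dotProduct, Pi.single_eq_same] at this
  linarith

lemma abs_dotProduct_le (h : HasRIP Ψ k δ) {u v : Fin p → ℝ} (huv : ∀ i, u i = 0 ∨ v i = 0)
    (hk : #{i | u i ≠ 0} + #{i | v i ≠ 0} ≤ k) :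
    |(Ψ *ᵥ u) ⬝ᵥ (Ψ *ᵥ v)| ≤ δ * (√(u ⬝ᵥ u) * √(v ⬝ᵥ v)) := by
  set a := √(u ⬝ᵥ u)
  set b := √(v ⬝ᵥ v)
  rcases (mul_nonneg (Real.sqrt_nonneg (u ⬝ᵥ u)) (Real.sqrt_nonneg (v ⬝ᵥ v))).eq_or_lt
    with hab | hab
  · have huv0 : u = 0 ∨ v = 0 := by
      simpa only [mul_eq_zero, Real.sqrt_eq_zero (dotProduct_self_nonneg u),
        Real.sqrt_eq_zero (dotProduct_self_nonneg v), dotProduct_self_eq_zero] using hab.symm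
    rw [← hab, mul_zero, abs_nonpos_iff]
    rcases huv0 with rfl | rfl <;> simp
  have hu_v : u ⬝ᵥ v = 0 := Finset.sum_eq_zero fun i _ => by rcases huv i with h | h <;> simp [h]
  have ha2 : a ^ 2 = u ⬝ᵥ u := Real.sq_sqrt (dotProduct_self_nonneg u)
  have hb2 : b ^ 2 = v ⬝ᵥ v := Real.sq_sqrt (dotProduct_self_nonneg v)
  have hcard : ∀ c : ℝ, #{i | (b • u + c • v) i ≠ 0} ≤ k := fun c =>
    (card_filter_ne_zero_le_add fun i hi => by
      by_contra! h0; simp [h0.1, h0.2] at hi).trans hk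
  -- `b • u ± a • v` both have squared norm `2a²b²`; the difference of their images' squared
  -- norms is `4ab⟨Ψu, Ψv⟩`, and the RIP pins both images' squared norms to within `2δa²b²`.
  have hrip : ∀ c : ℝ, c ^ 2 = a ^ 2 →
      (1 - δ) * (2 * a ^ 2 * b ^ 2) ≤ (Ψ *ᵥ (b • u + c • v)) ⬝ᵥ (Ψ *ᵥ (b • u + c • v)) ∧
      (Ψ *ᵥ (b • u + c • v)) ⬝ᵥ (Ψ *ᵥ (b • u + c • v)) ≤ (1 + δ) * (2 * a ^ 2 * b ^ 2) := by
    intro c hc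
    have hn : (b • u + c • v) ⬝ᵥ (b • u + c • v) = 2 * a ^ 2 * b ^ 2 := by
      simp only [add_dotProduct, dotProduct_add, smul_dotProduct, dotProduct_smul, smul_eq_mul,
        dotProduct_comm v u, hu_v, ← ha2, ← hb2]
      linear_combination b ^ 2 * hc
    rw [← hn]
    exact ⟨h.one_sub_mul_le (hcard c), h.le_one_add_mul (hcard c)⟩
  have hdiff : (Ψ *ᵥ (b • u + a • v)) ⬝ᵥ (Ψ *ᵥ (b • u + a • v))
      - (Ψ *ᵥ (b • u + (-a) • v)) ⬝ᵥ (Ψ *ᵥ (b • u + (-a) • v))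
      = 4 * (a * b) * ((Ψ *ᵥ u) ⬝ᵥ (Ψ *ᵥ v)) := by
    simp only [mulVec_add, mulVec_smul, add_dotProduct, dotProduct_add, smul_dotProduct,
      dotProduct_smul, smul_eq_mul, dotProduct_comm (Ψ *ᵥ v) (Ψ *ᵥ u)]
    ring
  obtain ⟨h1, h2⟩ := hrip a rfl
  obtain ⟨h3, h4⟩ := hrip (-a) (neg_sq a)
  rw [abs_le]
  constructor <;> nlinarith

lemma one_sub_mul_sqrt_le (h : HasRIP Ψ k δ) {e : Fin p → ℝ} (he : #{i | e i ≠ 0} ≤ k)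
    {lam : ℝ} (hlam : 0 ≤ lam) (hg : ∀ i, |(Ψᵀ *ᵥ (Ψ *ᵥ e)) i| ≤ lam) :
    (1 - δ) * √(e ⬝ᵥ e) ≤ lam * √(#{i | e i ≠ 0}) := by
  set N := √(e ⬝ᵥ e)
  have hN : N ^ 2 = e ⬝ᵥ e := Real.sq_sqrt (dotProduct_self_nonneg e)
  have hcorr : e ⬝ᵥ (Ψᵀ *ᵥ (Ψ *ᵥ e)) ≤ lam * ∑ i, |e i| := by
    rw [mul_sum]
    refine sum_le_sum fun i _ => ?_
    calc e i * (Ψᵀ *ᵥ (Ψ *ᵥ e)) i ≤ |e i| * |(Ψᵀ *ᵥ (Ψ *ᵥ e)) i| := by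
          rw [← abs_mul]; exact le_abs_self _
      _ ≤ lam * |e i| := by rw [mul_comm]; exact mul_le_mul_of_nonneg_right (hg i) (abs_nonneg _)
  have hsq : (1 - δ) * N ^ 2 ≤ lam * √(#{i | e i ≠ 0}) * N := by
    calc (1 - δ) * N ^ 2 ≤ (Ψ *ᵥ e) ⬝ᵥ (Ψ *ᵥ e) := hN ▸ h.one_sub_mul_le he
      _ = e ⬝ᵥ (Ψᵀ *ᵥ (Ψ *ᵥ e)) := by rw [dotProduct_transpose_mulVec]
      _ ≤ lam * ∑ i, |e i| := hcorr
      _ ≤ lam * √(#{i | e i ≠ 0}) * N := by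
        rw [mul_assoc]; exact mul_le_mul_of_nonneg_left (sum_abs_le_sqrt_card_mul_sqrt e) hlam
  rcases (show 0 ≤ N from Real.sqrt_nonneg _).eq_or_lt with hN0 | hN0
  · rw [← hN0, mul_zero]; positivity
  · nlinarith

lemma one_sub_mul_abs_apply_le (h : HasRIP Ψ k δ) {e : Fin p → ℝ} (he : #{i | e i ≠ 0} < k)
    (i : Fin p) :
    (1 - δ) * |e i| ≤ |(Ψᵀ *ᵥ (Ψ *ᵥ e)) i| + δ * √(e ⬝ᵥ e) := by
  set u : Fin p → ℝ := Pi.single i 1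
  set v := Function.update e i 0
  have hδ : 0 ≤ δ := h.nonneg (by omega) i
  have hu : #{j | u j ≠ 0} ≤ k := (card_filter_single_one_ne_zero i).trans_le (by omega)
  have huv : ∀ j, u j = 0 ∨ v j = 0 := fun j => by
    by_cases hj : j = i
    · subst hj; simp [v]
    · simp [u, hj]
  have hvk : #{j | u j ≠ 0} + #{j | v j ≠ 0} ≤ k := by
    rw [card_filter_single_one_ne_zero]
    have : #{j | v j ≠ 0} ≤ #{j | e j ≠ 0} := card_le_card fun j hj => by
      by_cases hji : j = i <;> simp_all [v]
    omega
  have hvv : √(v ⬝ᵥ v) ≤ √(e ⬝ᵥ e) := Real.sqrt_le_sqrt <| sum_le_sum fun j _ => by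
    by_cases hji : j = i <;> simp [v, hji, mul_self_nonneg]
  have hsplit : (Ψᵀ *ᵥ (Ψ *ᵥ e)) i = e i * ((Ψ *ᵥ u) ⬝ᵥ (Ψ *ᵥ u)) + (Ψ *ᵥ u) ⬝ᵥ (Ψ *ᵥ v) := by
    have he_split : e = e i • u + v := by
      ext j; by_cases hji : j = i <;> simp [u, v, hji]
    rw [← single_one_dotProduct i (Ψᵀ *ᵥ (Ψ *ᵥ e)), dotProduct_transpose_mulVec, dotProduct_comm]
    conv_lhs => rw [he_split]
    simp only [mulVec_add, mulVec_smul, dotProduct_add, dotProduct_smul, smul_eq_mul]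
    rfl
  have hcross := h.abs_dotProduct_le huv hvk
  have huu : 1 - δ ≤ (Ψ *ᵥ u) ⬝ᵥ (Ψ *ᵥ u) := by
    simpa [u] using h.one_sub_mul_le hu
  have hu1 : √(u ⬝ᵥ u) = 1 := by simp [u]
  rw [hu1, one_mul] at hcross
  calc (1 - δ) * |e i| ≤ |e i * ((Ψ *ᵥ u) ⬝ᵥ (Ψ *ᵥ u))| := by
        rw [abs_mul, abs_of_nonneg (dotProduct_self_nonneg _), mul_comm]
        exact mul_le_mul_of_nonneg_left huu (abs_nonneg _)
    _ = |(Ψᵀ *ᵥ (Ψ *ᵥ e)) i - (Ψ *ᵥ u) ⬝ᵥ (Ψ *ᵥ v)| := by rw [hsplit, add_sub_cancel_right]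
    _ ≤ |(Ψᵀ *ᵥ (Ψ *ᵥ e)) i| + δ * √(e ⬝ᵥ e) :=
        (abs_sub _ _).trans (add_le_add_right (hcross.trans (mul_le_mul_of_nonneg_left hvv hδ)) _)

lemma isUnit_det_gram (h : HasRIP Ψ k δ) (hδ : δ < 1) {A : Finset (Fin p)} (hA : #A ≤ k) :
    IsUnit ((colSub Ψ A)ᵀ * colSub Ψ A).det := by
  have hinj : Function.Injective (colSub Ψ A).mulVec := by
    intro a b hab
    set z : Fin p → ℝ := fun i => if hi : i ∈ A then (a - b) ⟨i, hi⟩ else 0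
    have hΨz : Ψ *ᵥ z = 0 := by rw [← colSub_mulVec, mulVec_sub, hab, sub_self]
    have hzk : #{i | z i ≠ 0} ≤ k := (card_le_card fun i hi => by
      by_contra hiA; simp [z, hiA] at hi).trans hA
    have hz : z ⬝ᵥ z = 0 := by
      have := h.one_sub_mul_le hzk
      rw [hΨz, zero_dotProduct] at this
      nlinarith [dotProduct_self_nonneg z]
    ext i
    simpa [z, sub_eq_zero] using congrFun (dotProduct_self_eq_zero.mp hz) i
  have := (PosDef.conjTranspose_mul_self _ hinj).isUnit
  rwa [conjTranspose_eq_transpose_of_trivial, isUnit_iff_isUnit_det] at this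

end HasRIP

lemma colSub_mulVec_restrict (Ψ : Matrix (Fin n) (Fin p) ℝ) {A : Finset (Fin p)}
    {x : Fin p → ℝ} (hxI : ∀ i ∉ A, x i = 0) :
    colSub Ψ A *ᵥ (fun j : {i // i ∈ A} => x j.1) = Ψ *ᵥ x := by
  rw [colSub_mulVec]
  congr 1
  ext j
  split_ifs with hj <;> simp [hxI, hj]

lemma eq_transpose_mulVec_residual {Ψ : Matrix (Fin n) (Fin p) ℝ}
    {A : Finset (Fin p)} (hA : IsUnit ((colSub Ψ A)ᵀ * colSub Ψ A).det) {y : Fin n → ℝ}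
    {x d : Fin p → ℝ} (hxI : ∀ i ∉ A, x i = 0)
    (hxA : (fun j : {i // i ∈ A} => x j.1) =
      ((colSub Ψ A)ᵀ * colSub Ψ A)⁻¹ *ᵥ ((colSub Ψ A)ᵀ *ᵥ y - fun j => d j.1))
    (hdI : ∀ i ∉ A, d i = (Ψᵀ *ᵥ (y - colSub Ψ A *ᵥ fun j => x j.1)) i) (i : Fin p) :
    d i = (Ψᵀ *ᵥ (y - Ψ *ᵥ x)) i := by
  rw [← colSub_mulVec_restrict Ψ hxI]
  by_cases hi : i ∈ A
  swap
  · exact hdI i hi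
  have hnormal : (colSub Ψ A)ᵀ *ᵥ (colSub Ψ A *ᵥ fun j => x j.1) =
      (colSub Ψ A)ᵀ *ᵥ y - fun j => d j.1 := by
    rw [mulVec_mulVec, hxA, mulVec_mulVec, mul_nonsing_inv _ hA, one_mulVec]
  have hi' := congrFun hnormal ⟨i, hi⟩
  rw [colSub_mulVec_restrict Ψ hxI] at hi' ⊢
  rw [mulVec_sub, Pi.sub_apply]
  simp only [Pi.sub_apply] at hi'
  change (Ψᵀ *ᵥ (Ψ *ᵥ x)) i = (Ψᵀ *ᵥ y) i - d i at hi'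
  linarith

lemma abs_le_of_filter_lt_abs_add_eq {A : Finset (Fin p)} {lam : ℝ} {x d : Fin p → ℝ}
    (hdA : ∀ i ∈ A, |d i| = lam) (hxI : ∀ i ∉ A, x i = 0)
    (hfix : univ.filter (fun i => lam < |x i + d i|) = A) (i : Fin p) : |d i| ≤ lam := by
  by_cases hi : i ∈ A
  · exact (hdA i hi).le
  · have : i ∉ univ.filter (fun i => lam < |x i + d i|) := hfix ▸ hi
    simpa [hxI i hi] using this

lemma lt_two_mul_of_le_add_mul {δ s lam N a : ℝ} (hs : 1 ≤ s) (hδ0 : 0 ≤ δ)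
    (hδ : δ * (4 * s + 1) ≤ 1) (hlam : 0 < lam) (hN : (1 - δ) * N ≤ lam * s)
    (ha : (1 - δ) * a ≤ lam + δ * N) : a < 2 * lam := by
  -- With `δ ≤ 1/5` and `4δs ≤ 1 − δ`, the assumption `2λ ≤ a` leads to `8(1 − δ) ≤ 5`.
  by_contra! h2a
  have hδ5 : δ * 5 ≤ 1 := by nlinarith
  have h1 : (1 - δ) * (2 * lam) ≤ lam + δ * N :=
    (mul_le_mul_of_nonneg_left h2a (by linarith)).trans ha
  have h2 : (1 - δ) * ((1 - δ) * (2 * lam)) ≤ (1 - δ) * lam + δ * (lam * s) := by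
    nlinarith [mul_le_mul_of_nonneg_left h1 (by linarith : (0 : ℝ) ≤ 1 - δ),
      mul_le_mul_of_nonneg_left hN hδ0]
  nlinarith [mul_le_mul_of_nonneg_left hδ hlam.le]

theorem stmt_16_general {n p : ℕ} (Ψ : Matrix (Fin n) (Fin p) ℝ)
    (xdag : Fin p → ℝ) (Adag : Finset (Fin p))
    (hAdag : Adag = Finset.univ.filter (fun i => xdag i ≠ 0))
    (T : ℕ) (hT : T = Adag.card)
    (y : Fin n → ℝ) (hy : y = Ψ *ᵥ xdag)
    (δ : ℝ)
    (hRIP : HasRIP Ψ (T + 1) δ)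
    (hAss1 : δ ≤ 1 / (4 * Real.sqrt T + 1))
    (lam : ℝ) (hlam : 0 < lam)
    (A : Finset (Fin p)) (hA : A ⊆ Adag)
    (d x : Fin p → ℝ)
    (hdA : ∀ i ∈ A, |d i| = lam)
    (hxI : ∀ i ∉ A, x i = 0)
    (hxA : (fun j : {i // i ∈ A} => x j.1) =
      ((colSub Ψ A)ᵀ * colSub Ψ A)⁻¹ *ᵥ ((colSub Ψ A)ᵀ *ᵥ y - fun j => d j.1))
    (hdI : ∀ i ∉ A, d i = (Ψᵀ *ᵥ (y - colSub Ψ A *ᵥ fun j => x j.1)) i)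
    (hfix : Finset.univ.filter (fun i => lam < |x i + d i|) = A) :
    Finset.univ.filter (fun i => 2 * lam ≤ |xdag i|) ⊆ A := by
  intro i hi
  by_contra hiA
  replace hi : 2 * lam ≤ |xdag i| := (mem_filter.mp hi).2
  have hi_dag : i ∈ Adag := by
    rw [hAdag, mem_filter]
    exact ⟨mem_univ i, fun h => by rw [h, abs_zero] at hi; linarith⟩
  have hs : 1 ≤ √(T : ℝ) := Real.one_le_sqrt.mpr (by exact_mod_cast hT ▸ card_pos.mpr ⟨i, hi_dag⟩)
  have hδ0 : 0 ≤ δ := hRIP.nonneg (by omega) i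
  have hδ : δ * (4 * √T + 1) ≤ 1 := (le_div_iff₀ (by positivity)).mp hAss1
  have hdet := hRIP.isUnit_det_gram (by nlinarith) ((card_le_card hA).trans (by omega))
  set e := xdag - x
  have he : #{j | e j ≠ 0} ≤ T := hT ▸ card_le_card fun j hj => by
    by_contra hj'
    have hxj : x j = 0 := hxI j fun h => hj' (hA h)
    simp_all [e]
  have hg : ∀ j, |(Ψᵀ *ᵥ (Ψ *ᵥ e)) j| ≤ lam := fun j => by
    rw [mulVec_sub, ← hy, ← eq_transpose_mulVec_residual hdet hxI hxA hdI j]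
    exact abs_le_of_filter_lt_abs_add_eq hdA hxI hfix j
  have hN := (hRIP.one_sub_mul_sqrt_le (by omega) hlam.le hg).trans
    (mul_le_mul_of_nonneg_left (Real.sqrt_le_sqrt (Nat.cast_le.mpr he)) hlam.le)
  have ha := (hRIP.one_sub_mul_abs_apply_le (e := e) (by omega) i).trans (add_le_add_left (hg i) _)
  have hlt := lt_two_mul_of_le_add_mul hs hδ0 hδ hlam hN ha
  simp only [e, Pi.sub_apply, hxI i hiA, sub_zero] at hlt
  linarith

/-- if `J_{λ,3} ⊆ A ⊆ A†` and the PDAS active-set map fixes `A`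
(i.e. `A' = A`), then `J_{λ,2} ⊆ A`. -/
theorem stmt_16 {n p : ℕ} (Ψ : Matrix (Fin n) (Fin p) ℝ)
    (xdag : Fin p → ℝ) (Adag : Finset (Fin p))
    (hAdag : Adag = Finset.univ.filter (fun i => xdag i ≠ 0))
    (T : ℕ) (hT : T = Adag.card)
    (y : Fin n → ℝ) (hy : y = Ψ *ᵥ xdag)
    (δ : ℝ) (hδ0 : 0 < δ) (hδ1 : δ < 1)
    (hRIP : HasRIP Ψ (T + 1) δ)
    (hAss1 : δ ≤ 1 / (4 * Real.sqrt T + 1))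
    (lam : ℝ) (hlam : 0 < lam)
    (A : Finset (Fin p)) (hA : A ⊆ Adag)
    (hJ3 : Finset.univ.filter (fun i => 3 * lam ≤ |xdag i|) ⊆ A)
    (d x : Fin p → ℝ)
    (hdA : ∀ i ∈ A, |d i| = lam)
    (hxI : ∀ i ∉ A, x i = 0)
    (hxA : (fun j : {i // i ∈ A} => x j.1) =
      ((colSub Ψ A)ᵀ * colSub Ψ A)⁻¹ *ᵥ ((colSub Ψ A)ᵀ *ᵥ y - fun j => d j.1))
    (hdI : ∀ i ∉ A, d i = (Ψᵀ *ᵥ (y - colSub Ψ A *ᵥ fun j => x j.1)) i)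
    (hfix : Finset.univ.filter (fun i => lam < |x i + d i|) = A) :
    Finset.univ.filter (fun i => 2 * lam ≤ |xdag i|) ⊆ A :=
  stmt_16_general Ψ xdag Adag hAdag T hT y hy δ hRIP hAss1 lam hlam A hA d x hdA hxI hxA hdI hfix
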